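/- If ⋀_{i∈I} (T_i → T'_i)^0 ≤ T, then there exist an index set L and types T̂_l, T̂'_l for l ∈ L such that T ≡ ⋀_{l∈L} (T̂_l → T̂'_l)^0, and for each l ∈ L there is a subset J_l ⊆ I with T̂_l ≤ T_j for all j ∈ J_l and ⋀_{j∈J_l} T̂'_j ≤ T̂'_l. -/

import Mathlib

set_option linter.unusedVariables false

-- Primitive types and term types of the unbind/rebind calculus.
mutual
inductive PrimTy : Type where
  | int : PrimTy
  | code : PrimTy
  | arrow : Ty → Ty → PrimTy
inductive Ty : Type where
  | prim : PrimTy → ℕ → Ty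
  | inter : Ty → Ty → Ty
end

/-- `T.raise k` increases all top-level conjunct levels by `k` (written `T^{+k}`). -/
def Ty.raise : Ty → ℕ → Ty
  | .prim τ ℓ, k => .prim τ (ℓ + k)
  | .inter T1 T2, k => .inter (T1.raise k) (T2.raise k)

/-- Congruence on types. -/
inductive TyEq : Ty → Ty → Prop where
  | refl : TyEq T T
  | symm : TyEq T1 T2 → TyEq T2 T1
  | trans : TyEq T1 T2 → TyEq T2 T3 → TyEq T1 T3
  | interCongr : TyEq T1 T1' → TyEq T2 T2' → TyEq (.inter T1 T2) (.inter T1' T2')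
  | arrowCongr : TyEq T1 T1' → TyEq T2 T2' →
      TyEq (.prim (.arrow T1 T2) ℓ) (.prim (.arrow T1' T2') ℓ)
  | idem : TyEq T (.inter T T)
  | comm : TyEq (.inter T1 T2) (.inter T2 T1)
  | assoc : TyEq (.inter T1 (.inter T2 T3)) (.inter (.inter T1 T2) T3)
  | distrib : TyEq (.inter (.prim (.arrow T T1) ℓ) (.prim (.arrow T T2) ℓ))
      (.prim (.arrow T (.inter T1 T2)) ℓ)
  | shift : TyEq (.prim (.arrow T' (Ty.raise T ℓ')) (ℓ+1)) (.prim (.arrow T' (Ty.raise T (ℓ'+1))) ℓ)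

/-- Subtyping on types. -/
inductive TySub : Ty → Ty → Prop where
  | int : TySub (.prim .int ℓ) (.prim .int (ℓ+1))
  | interElim : TySub (.inter T1 T2) T1
  | arrow : TySub T2 T1 → TySub T1' T2' →
      TySub (.prim (.arrow T1 T1') ℓ) (.prim (.arrow T2 T2') ℓ)
  | mono : TySub T1 T1' → TySub T2 T2' → TySub (.inter T1 T2) (.inter T1' T2')
  | trans : TySub T1 T2 → TySub T2 T3 → TySub T1 T3
  | ofEq : TyEq T1 T2 → TySub T1 T2

/-- Value types: intersections with at least one conjunct of level 0. -/
inductive IsValueTy : Ty → Prop where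
  | prim : IsValueTy (.prim τ 0)
  | inter : IsValueTy V → IsValueTy (.inter V T)

/-- `bigInter T Ts` is the intersection of the nonempty family `T :: Ts`. -/
def bigInter : Ty → List Ty → Ty
  | T, [] => T
  | T, T' :: Ts => .inter T (bigInter T' Ts)

abbrev TCtx := List (String × Ty)

/-- Terms of the unbind/rebind calculus. -/
inductive Tm : Type where
  | var : String → Tm
  | num : ℤ → Tm
  | add : Tm → Tm → Tm
  | lam : String → Tm → Tm
  | app : Tm → Tm → Tm
  | unbind : TCtx → Tm → Tm
  | rebind : Tm → List (String × Ty × Tm) → Tm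
  | error : Tm

abbrev TSubst := List (String × Ty × Tm)
abbrev USubst := List (String × Tm)

inductive IsValue : Tm → Prop where
  | lam : IsValue (.lam x t)
  | unbind : IsValue (.unbind Γ t)
  | num : IsValue (.num n)

mutual
/-- Free variables of a term. -/
def FV : Tm → Finset String
  | .var x => {x}
  | .num _ => ∅
  | .add t1 t2 => FV t1 ∪ FV t2
  | .lam x t => FV t \ {x}
  | .app t1 t2 => FV t1 ∪ FV t2
  | .unbind Γ' t => FV t \ (Γ'.map Prod.fst).toFinset
  | .rebind t r => FV t ∪ FVr r
  | .error => ∅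
/-- Free variables of a typed substitution. -/
def FVr : List (String × Ty × Tm) → Finset String
  | [] => ∅
  | p :: r => FV p.2.2 ∪ FVr r
end

/-- Free variables of an untyped substitution. -/
def FVu (σ : USubst) : Finset String := σ.foldr (fun p acc => FV p.2 ∪ acc) ∅

mutual
/-- `SubstM t σ t'` : the (capture-avoiding, partial) application of the
substitution `σ` to `t` is defined and equals `t'`. -/
inductive SubstM : Tm → USubst → Tm → Prop where
  | varHit : σ.lookup x = some v → SubstM (.var x) σ v
  | varMiss : σ.lookup x = none → SubstM (.var x) σ (.var x)
  | num : SubstM (.num n) σ (.num n)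
  | error : SubstM .error σ .error
  | add : SubstM t1 σ t1' → SubstM t2 σ t2' → SubstM (.add t1 t2) σ (.add t1' t2')
  | app : SubstM t1 σ t1' → SubstM t2 σ t2' → SubstM (.app t1 t2) σ (.app t1' t2')
  | lam : x ∉ FVu σ → SubstM t (σ.filter (fun p => p.1 != x)) t' →
      SubstM (.lam x t) σ (.lam x t')
  | unbind : (∀ y ∈ Γ'.map Prod.fst, y ∉ FVu σ) →
      SubstM t (σ.filter (fun p => !(Γ'.map Prod.fst).contains p.1)) t' →
      SubstM (.unbind Γ' t) σ (.unbind Γ' t')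
  | rebind : SubstM t σ t' → SubstML r σ r' → SubstM (.rebind t r) σ (.rebind t' r')
inductive SubstML : TSubst → USubst → TSubst → Prop where
  | nil : SubstML [] σ []
  | cons : SubstM u σ u' → SubstML r σ r' → SubstML ((x,T,u) :: r) σ ((x,T,u') :: r')
end

mutual
/-- The intersection type system with levels. -/
inductive Typed : TCtx → Tm → Ty → Prop where
  | var : Γ.lookup x = some T → Typed Γ (.var x) T
  | num : Typed Γ (.num n) (.prim .int 0)
  | sum : Typed Γ t1 (.prim .int ℓ) → Typed Γ t2 (.prim .int ℓ) →
      Typed Γ (.add t1 t2) (.prim .int ℓ)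
  | error : Typed Γ .error T
  | abs : Γ.lookup x = none → Typed ((x,T) :: Γ) t T' →
      Typed Γ (.lam x t) (.prim (.arrow T T') 0)
  | app : Typed Γ t1 (.prim (.arrow V T) 0) → IsValueTy V → Typed Γ t2 V →
      Typed Γ (.app t1 t2) T
  | unbind0 : (∀ x ∈ Γ'.map Prod.fst, Γ.lookup x = none) → Typed (Γ' ++ Γ) t T →
      Typed Γ (.unbind Γ' t) (.prim .code 0)
  | unbind : (∀ x ∈ Γ'.map Prod.fst, Γ.lookup x = none) → Typed (Γ' ++ Γ) t T →
      Typed Γ (.unbind Γ' t) (T.raise 1)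
  | rebind : Typed Γ t (T.raise 1) → SubstOk Γ r → Typed Γ (.rebind t r) T
  | inter : Typed Γ t T1 → Typed Γ t T2 → Typed Γ t (.inter T1 T2)
  | sub : Typed Γ t T → TySub T T' → Typed Γ t T'
/-- `SubstOk Γ r` : the typed substitution `r` is well typed in `Γ`. -/
inductive SubstOk : TCtx → TSubst → Prop where
  | nil : SubstOk Γ []
  | cons : Typed Γ u V → IsValueTy V → TySub V T → SubstOk Γ r →
      SubstOk Γ ((x,T,u) :: r)
end

/-- All terms of a typed substitution are values. -/
def IsValSubst (r : TSubst) : Prop := ∀ p ∈ r, IsValue p.2.2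

/-- `Γ' ⊆` the type context extracted from `r`. -/
def CtxSub (Γ' : TCtx) (r : TSubst) : Prop := ∀ x T, (x,T) ∈ Γ' → ∃ u, (x,T,u) ∈ r

/-- The untyped substitution extracted from `r`, restricted to variables in `xs`. -/
def restrictTo (r : TSubst) (xs : List String) : USubst :=
  (r.filter (fun p => xs.contains p.1)).map (fun p => (p.1, p.2.2))

/-- Evaluation contexts. -/
inductive ECtx : Type where
  | hole : ECtx
  | addL : ECtx → Tm → ECtx
  | addR : ℤ → ECtx → ECtx
  | appL : ECtx → Tm → ECtx
  | appR : Tm → ECtx → ECtx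
  | reb : Tm → TSubst → String → Ty → ECtx → ECtx

def plug : ECtx → Tm → Tm
  | .hole, u => u
  | .addL E t, u => .add (plug E u) t
  | .addR n E, u => .add (.num n) (plug E u)
  | .appL E t, u => .app (plug E u) t
  | .appR v E, u => .app v (plug E u)
  | .reb t r x T E, u => .rebind t (r ++ [(x, T, plug E u)])

/-- Well-formed evaluation contexts (`v E` requires `v` a value). -/
inductive IsECtx : ECtx → Prop where
  | hole : IsECtx .hole
  | addL : IsECtx E → IsECtx (.addL E t)
  | addR : IsECtx E → IsECtx (.addR n E)
  | appL : IsECtx E → IsECtx (.appL E t)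
  | appR : IsValue v → IsECtx E → IsECtx (.appR v E)
  | reb : IsECtx E → IsECtx (.reb t r x T E)

/-- Call-by-value reduction. -/
inductive Step : Tm → Tm → Prop where
  | sum : Step (.add (.num n1) (.num n2)) (.num (n1 + n2))
  | app : IsValue v → SubstM t [(x, v)] t' → Step (.app (.lam x t) v) t'
  | rebindUnbindYes : IsValSubst r → CtxSub Γ' r →
      SubstM t (restrictTo r (Γ'.map Prod.fst)) t' →
      Step (.rebind (.unbind Γ' t) r) t'
  | rebindUnbindNo : IsValSubst r → ¬ CtxSub Γ' r →
      Step (.rebind (.unbind Γ' t) r) .error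
  | rebindNum : IsValSubst r → Step (.rebind (.num n) r) (.num n)
  | rebindSum : IsValSubst r →
      Step (.rebind (.add t1 t2) r) (.add (.rebind t1 r) (.rebind t2 r))
  | rebindAbs : IsValSubst r → Step (.rebind (.lam x t) r) (.lam x (.rebind t r))
  | rebindApp : IsValSubst r →
      Step (.rebind (.app t1 t2) r) (.app (.rebind t1 r) (.rebind t2 r))
  | rebindRebind : IsValSubst rv → Step (.rebind t r) t' →
      Step (.rebind (.rebind t r) rv) (.rebind t' rv)
  | rebindError : IsValSubst r → Step (.rebind .error r) .error
  | ctx : E ≠ .hole → IsECtx E → Step t t' → Step (plug E t) (plug E t')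
  | ctxError : E ≠ .hole → IsECtx E → Step t .error → Step (plug E t) .error

/-- Level-0 arrow type from a pair of types. -/
def arr0 (p : Ty × Ty) : Ty := .prim (.arrow p.1 p.2) 0

/-- Primitive type with a level. -/
def primL (p : PrimTy × ℕ) : Ty := .prim p.1 p.2

/-!
Subtyping from an intersection of atoms can be read off cut-free: if `T ≤ T'`, every atom of `T'`
is derivable from the atoms of `T`, where `int^ℓ` is derivable from some `int^ℓ₀` with `ℓ₀ ≤ ℓ`,
`code^ℓ` only from itself, and an arrow `(a → c)^0` from finitely many arrows `(x → y)^k` with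
`a ≤ x` whose raised codomains `y^{+k}` intersect to a subtype of `c`. Derivability composes, and
every rule of `≡` and `≤` preserves it; levels of arrows are absorbed by the congruence
`(a → b)^ℓ ≡ (a → b^{+ℓ})^0`. From an intersection of level-0 arrows no `int` or `code` atom is
derivable, so every atom of `T` is an arrow obtained as above, which is the required presentation.
-/

namespace Ty

@[simp] theorem raise_zero : ∀ T : Ty, T.raise 0 = T
  | .prim _ _ => rfl
  | .inter T₁ T₂ => by rw [Ty.raise, raise_zero T₁, raise_zero T₂]

theorem raise_raise : ∀ (T : Ty) (k k' : ℕ), (T.raise k).raise k' = T.raise (k + k')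
  | .prim _ _, k, k' => by rw [Ty.raise, Ty.raise, Ty.raise, Nat.add_assoc]
  | .inter T₁ T₂, k, k' => by rw [Ty.raise, Ty.raise, Ty.raise, raise_raise T₁, raise_raise T₂]

def atoms : Ty → Set Ty
  | .prim τ ℓ => {.prim τ ℓ}
  | .inter T₁ T₂ => T₁.atoms ∪ T₂.atoms

end Ty

theorem TyEq.raise {T T' : Ty} (h : TyEq T T') (k : ℕ) : TyEq (T.raise k) (T'.raise k) := by
  induction h with
  | refl => exact .refl
  | symm _ ih => exact ih.symm
  | trans _ _ ih₁ ih₂ => exact ih₁.trans ih₂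
  | interCongr _ _ ih₁ ih₂ => exact .interCongr ih₁ ih₂
  | arrowCongr h₁ h₂ => exact .arrowCongr h₁ h₂
  | idem => exact .idem
  | comm => exact .comm
  | assoc => exact .assoc
  | distrib => exact .distrib
  | shift => rw [Ty.raise, Ty.raise, Nat.add_right_comm]; exact .shift

theorem TyEq.arrow_arr0 (a b : Ty) : ∀ ℓ : ℕ, TyEq (.prim (.arrow a b) ℓ) (arr0 (a, b.raise ℓ))
  | 0 => by rw [Ty.raise_zero]; exact .refl
  | ℓ + 1 => by
      have hshift : TyEq (.prim (.arrow a b) (ℓ + 1)) (.prim (.arrow a (b.raise 1)) ℓ) := by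
        simpa only [Ty.raise_zero] using
          (TyEq.shift : TyEq (.prim (.arrow a (b.raise 0)) (ℓ + 1)) _)
      have hnormal := arrow_arr0 a (b.raise 1) ℓ
      rw [Ty.raise_raise, Nat.add_comm] at hnormal
      exact hshift.trans hnormal

theorem TyEq.bigInter_append (T U : Ty) (Us : List Ty) :
    ∀ Ts : List Ty, TyEq (.inter (bigInter T Ts) (bigInter U Us)) (bigInter T (Ts ++ U :: Us))
  | [] => .refl
  | T' :: Ts => .trans TyEq.assoc.symm (.interCongr .refl (bigInter_append T' U Us Ts))

theorem TySub.refl (T : Ty) : TySub T T := .ofEq .refl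

theorem TySub.raise {T T' : Ty} (h : TySub T T') (k : ℕ) : TySub (T.raise k) (T'.raise k) := by
  induction h with
  | int => rw [Ty.raise, Ty.raise, Nat.add_right_comm]; exact .int
  | interElim => exact .interElim
  | arrow h₁ h₂ => exact .arrow h₁ h₂
  | mono _ _ ih₁ ih₂ => exact .mono ih₁ ih₂
  | trans _ _ ih₁ ih₂ => exact ih₁.trans ih₂
  | ofEq h => exact .ofEq (h.raise k)

/-- `ArrowDerivable S a c`: the arrow `(a → c)^0` is derivable from the arrow atoms in `S`. -/
inductive ArrowDerivable (S : Set Ty) (a : Ty) : Ty → Prop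
  | atom {x y : Ty} {k : ℕ} : .prim (.arrow x y) k ∈ S → TySub a x → ArrowDerivable S a (y.raise k)
  | inter {c₁ c₂ : Ty} : ArrowDerivable S a c₁ → ArrowDerivable S a c₂ →
      ArrowDerivable S a (.inter c₁ c₂)
  | sub {c c' : Ty} : ArrowDerivable S a c → TySub c c' → ArrowDerivable S a c'

/-- A cut-free form of `⋀ S ≤ T` for a set of atoms `S`. -/
def Derivable (S : Set Ty) : Ty → Prop
  | .prim .int ℓ => ∃ ℓ₀ ≤ ℓ, .prim .int ℓ₀ ∈ S
  | .prim .code ℓ => .prim .code ℓ ∈ S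
  | .prim (.arrow a b) ℓ => ArrowDerivable S a (b.raise ℓ)
  | .inter T₁ T₂ => Derivable S T₁ ∧ Derivable S T₂

namespace ArrowDerivable

variable {S S' : Set Ty} {a : Ty}

theorem mono (hS : S ⊆ S') {c : Ty} (h : ArrowDerivable S a c) : ArrowDerivable S' a c := by
  induction h with
  | atom hm hax => exact atom (hS hm) hax
  | inter _ _ ih₁ ih₂ => exact inter ih₁ ih₂
  | sub _ hc ih => exact sub ih hc

theorem anti {a' : Ty} (ha : TySub a' a) {c : Ty} (h : ArrowDerivable S a c) :
    ArrowDerivable S a' c := by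
  induction h with
  | atom hm hax => exact atom hm (ha.trans hax)
  | inter _ _ ih₁ ih₂ => exact inter ih₁ ih₂
  | sub _ hc ih => exact sub ih hc

end ArrowDerivable

namespace Derivable

variable {S S' : Set Ty}

theorem mono (hS : S ⊆ S') : ∀ {T : Ty}, Derivable S T → Derivable S' T
  | .prim .int _, ⟨ℓ₀, hle, hm⟩ => ⟨ℓ₀, hle, hS hm⟩
  | .prim .code _, hm => hS hm
  | .prim (.arrow _ _) _, h => ArrowDerivable.mono hS h
  | .inter _ _, ⟨h₁, h₂⟩ => ⟨mono hS h₁, mono hS h₂⟩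

theorem of_atoms_subset : ∀ {T : Ty}, T.atoms ⊆ S → Derivable S T
  | .prim .int ℓ, h => ⟨ℓ, le_rfl, h rfl⟩
  | .prim .code _, h => h rfl
  | .prim (.arrow a _) _, h => .atom (h rfl) (.refl a)
  | .inter _ _, h => ⟨of_atoms_subset (Set.subset_union_left.trans h),
      of_atoms_subset (Set.subset_union_right.trans h)⟩

theorem of_mem_atoms {m : Ty} : ∀ {T : Ty}, Derivable S T → m ∈ T.atoms → Derivable S m
  | .prim _ _, h, hm => Set.mem_singleton_iff.mp hm ▸ h
  | .inter _ _, ⟨h₁, _⟩, .inl hm => of_mem_atoms h₁ hm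
  | .inter _ _, ⟨_, h₂⟩, .inr hm => of_mem_atoms h₂ hm

theorem refl (T : Ty) : Derivable T.atoms T := of_atoms_subset subset_rfl

end Derivable

theorem ArrowDerivable.trans {S : Set Ty} {T a c : Ty} (hT : Derivable S T)
    (h : ArrowDerivable T.atoms a c) : ArrowDerivable S a c := by
  induction h with
  | atom hm hax => exact ArrowDerivable.anti hax (hT.of_mem_atoms hm)
  | inter _ _ ih₁ ih₂ => exact .inter ih₁ ih₂
  | sub _ hc ih => exact .sub ih hc

theorem Derivable.trans {S : Set Ty} {T : Ty} (hT : Derivable S T) :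
    ∀ {U : Ty}, Derivable T.atoms U → Derivable S U
  | .prim .int _, ⟨_, hle, hm⟩ =>
      let ⟨ℓ₁, hle₁, hS⟩ := hT.of_mem_atoms hm
      ⟨ℓ₁, hle₁.trans hle, hS⟩
  | .prim .code _, hm => hT.of_mem_atoms hm
  | .prim (.arrow _ _) _, h => ArrowDerivable.trans hT h
  | .inter _ _, ⟨h₁, h₂⟩ => ⟨Derivable.trans hT h₁, Derivable.trans hT h₂⟩

theorem TyEq.derivable_atoms {T T' : Ty} (h : TyEq T T') :
    Derivable T.atoms T' ∧ Derivable T'.atoms T := by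
  induction h with
  | refl => exact ⟨Derivable.refl _, Derivable.refl _⟩
  | symm _ ih => exact ih.symm
  | trans _ _ ih₁ ih₂ => exact ⟨ih₁.1.trans ih₂.1, ih₂.2.trans ih₁.2⟩
  | interCongr _ _ ih₁ ih₂ =>
      exact ⟨⟨ih₁.1.mono Set.subset_union_left, ih₂.1.mono Set.subset_union_right⟩,
        ⟨ih₁.2.mono Set.subset_union_left, ih₂.2.mono Set.subset_union_right⟩⟩
  | arrowCongr h₁ h₂ =>
      exact ⟨.sub (.atom rfl (.ofEq h₁.symm)) (.ofEq (h₂.raise _)),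
        .sub (.atom rfl (.ofEq h₁)) (.ofEq (h₂.symm.raise _))⟩
  | idem | comm | assoc =>
      constructor <;> apply Derivable.of_atoms_subset <;> intro m <;> simp only [Ty.atoms] <;> grind
  | distrib =>
      refine ⟨.inter (.atom (.inl rfl) (.refl _)) (.atom (.inr rfl) (.refl _)), ?_, ?_⟩
      · exact .sub (.atom rfl (.refl _)) .interElim
      · exact .sub (.atom rfl (.refl _)) ((TySub.ofEq .comm).trans .interElim)
  | @shift _ T ℓ' ℓ =>
      have hlevel : (T.raise ℓ').raise (ℓ + 1) = (T.raise (ℓ' + 1)).raise ℓ := by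
        rw [Ty.raise_raise, Ty.raise_raise, Nat.add_right_comm, Nat.add_assoc]
      refine ⟨?_, ?_⟩
      · show ArrowDerivable _ _ ((T.raise (ℓ' + 1)).raise ℓ)
        exact hlevel ▸ .atom rfl (.refl _)
      · show ArrowDerivable _ _ ((T.raise ℓ').raise (ℓ + 1))
        exact hlevel ▸ .atom rfl (.refl _)

theorem TySub.derivable_atoms {T T' : Ty} (h : TySub T T') : Derivable T.atoms T' := by
  induction h with
  | @int ℓ => exact ⟨ℓ, ℓ.le_succ, rfl⟩
  | interElim => exact .of_atoms_subset Set.subset_union_left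
  | arrow h₁ h₂ => exact .sub (.atom rfl h₁) (h₂.raise _)
  | mono _ _ ih₁ ih₂ => exact ⟨ih₁.mono Set.subset_union_left, ih₂.mono Set.subset_union_right⟩
  | trans _ _ ih₁ ih₂ => exact ih₁.trans ih₂
  | ofEq h => exact h.derivable_atoms.1

def ArrowsEntail (F : List (Ty × Ty)) (l : Ty × Ty) : Prop :=
  ∃ (j : Ty × Ty) (js : List (Ty × Ty)),
    (∀ a ∈ j :: js, a ∈ F) ∧ (∀ a ∈ j :: js, TySub l.1 a.1) ∧
    TySub (bigInter j.2 (js.map Prod.snd)) l.2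

theorem ArrowDerivable.arrowsEntail {F : List (Ty × Ty)} {a c : Ty}
    (h : ArrowDerivable (arr0 '' {q | q ∈ F}) a c) : ArrowsEntail F (a, c) := by
  induction h with
  | atom hm hax =>
      obtain ⟨q, hq, hqeq⟩ := hm
      cases hqeq
      exact ⟨q, [], by simpa using hq, by simpa using hax, by simpa [bigInter] using TySub.refl q.2⟩
  | inter _ _ ih₁ ih₂ =>
      obtain ⟨j, js, hF, hdom, hcod⟩ := ih₁
      obtain ⟨j', js', hF', hdom', hcod'⟩ := ih₂
      refine ⟨j, js ++ j' :: js', ?_, ?_, ?_⟩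
      · grind
      · grind
      · rw [List.map_append, List.map_cons]
        exact (TySub.ofEq (TyEq.bigInter_append _ _ _ _).symm).trans (.mono hcod hcod')
  | sub _ hc ih =>
      obtain ⟨j, js, hF, hdom, hcod⟩ := ih
      exact ⟨j, js, hF, hdom, hcod.trans hc⟩

theorem exists_arr0_presentation (F : List (Ty × Ty)) :
    ∀ T : Ty, Derivable (arr0 '' {q | q ∈ F}) T →
      ∃ (q : Ty × Ty) (qs : List (Ty × Ty)),
        TyEq T (bigInter (arr0 q) (qs.map arr0)) ∧ ∀ l ∈ q :: qs, ArrowsEntail F l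
  | .prim .int _, ⟨_, _, _, _, hq⟩ => by simp [arr0] at hq
  | .prim .code _, ⟨_, _, hq⟩ => by simp [arr0] at hq
  | .prim (.arrow a b) ℓ, h =>
      ⟨(a, b.raise ℓ), [], TyEq.arrow_arr0 a b ℓ, by simpa using h.arrowsEntail⟩
  | .inter T₁ T₂, ⟨h₁, h₂⟩ => by
      obtain ⟨q, qs, heq, hent⟩ := exists_arr0_presentation F T₁ h₁
      obtain ⟨q', qs', heq', hent'⟩ := exists_arr0_presentation F T₂ h₂
      refine ⟨q, qs ++ q' :: qs', ?_, by grind⟩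
      rw [List.map_append, List.map_cons]
      exact (TyEq.interCongr heq heq').trans (TyEq.bigInter_append _ _ _ _)

theorem atoms_bigInter_arr0 (p : Ty × Ty) (ps : List (Ty × Ty)) :
    (bigInter (arr0 p) (ps.map arr0)).atoms = arr0 '' {q | q ∈ p :: ps} := by
  induction ps generalizing p with
  | nil => simp [bigInter, arr0, Ty.atoms]
  | cons p' ps ih =>
      rw [List.map_cons, bigInter, Ty.atoms, ih]
      ext m
      simp [arr0, Ty.atoms, eq_comm]

/-- inversion of subtyping for intersections of level-0 arrows. -/
theorem stmt1 (p : Ty × Ty) (ps : List (Ty × Ty)) (T : Ty)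
    (h : TySub (bigInter (arr0 p) (ps.map arr0)) T) :
    ∃ (q : Ty × Ty) (qs : List (Ty × Ty)),
      TyEq T (bigInter (arr0 q) (qs.map arr0)) ∧
      ∀ l ∈ q :: qs, ∃ (j : Ty × Ty) (js : List (Ty × Ty)),
        (∀ a ∈ j :: js, a ∈ p :: ps) ∧
        (∀ a ∈ j :: js, TySub l.1 a.1) ∧
        TySub (bigInter j.2 (js.map Prod.snd)) l.2 := by
  have hT : Derivable (arr0 '' {q | q ∈ p :: ps}) T := by
    simpa only [atoms_bigInter_arr0] using h.derivable_atoms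
  exact exists_arr0_presentation (p :: ps) T hT
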